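/- (Proposition 3, CDF form) Let f be a ReLU network as defined and let the input x be a Gaussian-mixture random vector with law μ = Σ_{k=1}^K α_k N(μ_k, Σ_k). For each binary vector ζ' ∈ {0,1}^N set μ̃_{k,ζ'} = C̄^{(L)} μ_k + d̄^{(L)} and Σ̃_{k,ζ'} = C̄^{(L)} Σ_k (C̄^{(L)})ᵀ, assumed invertible for all k and all ζ' with P(ζ(x) = ζ') > 0. Then for every φ ∈ ℝ^{n_L}: P( f(x) < φ componentwise ) = Σ_{ζ' : P(ζ(x) = ζ') > 0} Σ_{k=1}^K α_k · N(μ̃_{k,ζ'}, Σ̃_{k,ζ'})( { (u, w) ∈ ℝ^N × ℝ^{n_L} : u ∈ O(ζ') and w < φ componentwise } ), a sum of Gaussian orthant probabilities. -/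

import Mathlib

/-!
On the inputs inducing a fixed activation pattern `ζ'` every pre-activation is affine in `x`,
with coefficients `C̄, d̄`; hence `{ζ(x) = ζ', f(x) < φ}` is the preimage of
`O(ζ') × {w < φ}` under `x ↦ C̄ x + d̄`. Splitting `P(f(x) < φ)` over the finitely many patterns
(those of probability zero contribute nothing) and over the mixture components, it remains to
know that the image of `N(m, S)` under `x ↦ C x + d` is `N(C m + d, C S Cᵀ)`. Writing
`N(m, A Aᵀ)` as the law of `m + A Z` with `Z` standard, this follows from the characteristic
function of `c + A Z`, which depends only on `c` and `A Aᵀ`.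
-/

open Matrix MeasureTheory ProbabilityTheory

namespace ReluPaper

variable {n : ℕ → ℕ}

/-- Hidden representations of the ReLU network: `hid W b x ℓ` is the paper's
`h_{ℓ+1}(x)`, so that for a network with `L = M + 1` layers the output is
`f(x) = h_L(x) = hid W b x M`. -/
noncomputable def hid (W : ∀ ℓ : ℕ, Matrix (Fin (n (ℓ + 1))) (Fin (n ℓ)) ℝ)
    (b : ∀ ℓ : ℕ, Fin (n (ℓ + 1)) → ℝ) (x : Fin (n 0) → ℝ) :
    ∀ ℓ : ℕ, Fin (n (ℓ + 1)) → ℝ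
  | 0 => W 0 *ᵥ x + b 0
  | ℓ + 1 => W (ℓ + 1) *ᵥ (fun i => max 0 (hid W b x ℓ i)) + b (ℓ + 1)

/-- The matrices `C_ℓ` of the paper (0-indexed: `Cmat W z ℓ` is the paper's `C_{ℓ+1}`),
built from an activation pattern `z` via `C₁ = W₁`, `C_ℓ = W_ℓ diag(z_{ℓ-1}) C_{ℓ-1}`. -/
noncomputable def Cmat (W : ∀ ℓ : ℕ, Matrix (Fin (n (ℓ + 1))) (Fin (n ℓ)) ℝ)
    (z : ∀ ℓ : ℕ, Fin (n (ℓ + 1)) → ℝ) :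
    ∀ ℓ : ℕ, Matrix (Fin (n (ℓ + 1))) (Fin (n 0)) ℝ
  | 0 => W 0
  | ℓ + 1 => W (ℓ + 1) * Matrix.diagonal (z ℓ) * Cmat W z ℓ

/-- The vectors `d_ℓ` of the paper (0-indexed: `dvec W b z ℓ` is the paper's `d_{ℓ+1}`),
via `d₁ = b₁`, `d_ℓ = W_ℓ diag(z_{ℓ-1}) d_{ℓ-1} + b_ℓ`. -/
noncomputable def dvec (W : ∀ ℓ : ℕ, Matrix (Fin (n (ℓ + 1))) (Fin (n ℓ)) ℝ)
    (b : ∀ ℓ : ℕ, Fin (n (ℓ + 1)) → ℝ) (z : ∀ ℓ : ℕ, Fin (n (ℓ + 1)) → ℝ) :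
    ∀ ℓ : ℕ, Fin (n (ℓ + 1)) → ℝ
  | 0 => b 0
  | ℓ + 1 => W (ℓ + 1) *ᵥ (Matrix.diagonal (z ℓ) *ᵥ dvec W b z ℓ) + b (ℓ + 1)

/-- `x` induces activation pattern `z`, i.e. `𝟙(h_ℓ) = z_ℓ` for every hidden layer
`ℓ = 1, …, L - 1` of a network with `L = M + 1` layers. -/
def inducesPattern (M : ℕ) (W : ∀ ℓ : ℕ, Matrix (Fin (n (ℓ + 1))) (Fin (n ℓ)) ℝ)
    (b : ∀ ℓ : ℕ, Fin (n (ℓ + 1)) → ℝ) (x : Fin (n 0) → ℝ)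
    (z : ∀ ℓ : ℕ, Fin (n (ℓ + 1)) → ℝ) : Prop :=
  ∀ ℓ < M, ∀ i, (if 0 < hid W b x ℓ i then (1 : ℝ) else 0) = z ℓ i

/-- Index set for the stacked vector `[h₁ᵀ, …, h_{L-1}ᵀ]ᵀ` (with `L = M + 1`):
a hidden layer index together with a neuron index in that layer. -/
abbrev PatIdx (M : ℕ) (n : ℕ → ℕ) := (ℓ : Fin M) × Fin (n (ℓ.1 + 1))

/-- The `{0,1}`-valued activation pattern associated with a boolean vector on the
stacked index set. -/
def zOf {M : ℕ} (s : PatIdx M n → Bool) : ∀ ℓ : ℕ, Fin (n (ℓ + 1)) → ℝ :=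
  fun ℓ i => if h : ℓ < M then (if s ⟨⟨ℓ, h⟩, i⟩ then 1 else 0) else 0

/-- The multivariate (possibly degenerate) Gaussian distribution `N(m, S)` on `ι → ℝ`:
the pushforward of a standard Gaussian under the affine map `x ↦ m + √S x`
(with junk value `0` if `S` is not positive semidefinite, a case never used below). -/
noncomputable def mvGaussian {ι : Type*} [Fintype ι] [DecidableEq ι]
    (m : ι → ℝ) (S : Matrix ι ι ℝ) : Measure (ι → ℝ) :=
  letI := Classical.propDecidable S.PosSemidef
  if hS : S.PosSemidef then
    Measure.map (fun x => m + (hS.1.eigenvectorUnitary.1 * Matrix.diagonal ((Real.sqrt ·) ∘ hS.1.eigenvalues) *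
      (star hS.1.eigenvectorUnitary : Matrix ι ι ℝ)) *ᵥ x) (Measure.pi fun _ : ι => gaussianReal 0 1)
  else 0

end ReluPaper

theorem StrongDual.apply_eq_dotProduct {ι : Type*} [Fintype ι] [DecidableEq ι]
    (L : StrongDual ℝ (ι → ℝ)) (y : ι → ℝ) : L y = (fun j => L (Pi.single j 1)) ⬝ᵥ y := by
  conv_lhs => rw [pi_eq_sum_univ' y]
  simp [dotProduct, mul_comm]

theorem Matrix.PosSemidef.cfc_sqrt_mul_transpose_self {ι : Type*} [Fintype ι] [DecidableEq ι]
    {S : Matrix ι ι ℝ} (hS : S.PosSemidef) : cfc Real.sqrt S * (cfc Real.sqrt S)ᵀ = S := by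
  have hsymm : (cfc Real.sqrt S)ᵀ = cfc Real.sqrt S := by
    rw [← conjTranspose_eq_transpose_of_trivial]
    exact cfc_predicate (p := IsSelfAdjoint) Real.sqrt S
  rw [hsymm, ← cfc_mul Real.sqrt Real.sqrt S]
  conv_rhs => rw [← cfc_id' ℝ S hS.1.isSelfAdjoint]
  refine cfc_congr fun x hx => Real.mul_self_sqrt ?_
  rw [hS.1.spectrum_real_eq_range_eigenvalues] at hx
  obtain ⟨i, rfl⟩ := hx
  exact hS.eigenvalues_nonneg i

namespace ProbabilityTheory

open Complex

theorem charFunDual_gaussianReal_zero_one (L : StrongDual ℝ ℝ) :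
    charFunDual (gaussianReal 0 1) L = cexp (-(L 1 ^ 2 / 2 : ℝ)) := by
  rw [charFunDual_eq_charFun_map_one, gaussianReal_map_continuousLinearMap, charFun_gaussianReal]
  simp [sq_nonneg]

variable {ι κ κ' : Type*} [Fintype ι] [DecidableEq ι] [Fintype κ] [DecidableEq κ]
  [Fintype κ'] [DecidableEq κ']

theorem charFunDual_map_affine_pi_gaussianReal (A : Matrix ι κ ℝ) (c : ι → ℝ)
    (L : StrongDual ℝ (ι → ℝ)) :
    charFunDual ((Measure.pi fun _ : κ => gaussianReal 0 1).map fun x => c + A *ᵥ x) L =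
      cexp (L c * I) * cexp (-((fun j => L (Pi.single j 1)) ⬝ᵥ
        (A * Aᵀ) *ᵥ (fun j => L (Pi.single j 1)) / 2 : ℝ)) := by
  set ℓ : ι → ℝ := fun j => L (Pi.single j 1)
  have hquad : ∑ i, L (A *ᵥ Pi.single i 1) ^ 2 = ℓ ⬝ᵥ (A * Aᵀ) *ᵥ ℓ := by
    calc ∑ i, L (A *ᵥ Pi.single i 1) ^ 2 = (ℓ ᵥ* A) ⬝ᵥ (ℓ ᵥ* A) := by
          refine Finset.sum_congr rfl fun i _ => ?_
          rw [StrongDual.apply_eq_dotProduct L (A *ᵥ _), dotProduct_mulVec, dotProduct_single,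
            mul_one, sq]
      _ = ℓ ⬝ᵥ (A * Aᵀ) *ᵥ ℓ := by
          rw [← mulVec_mulVec, ← dotProduct_mulVec, mulVec_transpose]
  have hmap : (fun x => c + A *ᵥ x) = (c + ·) ∘ (Matrix.mulVecLin A).toContinuousLinearMap := rfl
  rw [hmap, ← Measure.map_map (by fun_prop) (by fun_prop), charFunDual_map_const_add,
    charFunDual_map, charFunDual_pi, mul_comm, ← hquad]
  simp_rw [charFunDual_gaussianReal_zero_one, ← Complex.exp_sum]
  push_cast
  simp [Finset.sum_div]

theorem map_affine_pi_gaussianReal_eq_of_mul_transpose_eq {A : Matrix ι κ ℝ} {B : Matrix ι κ' ℝ}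
    (h : A * Aᵀ = B * Bᵀ) (c : ι → ℝ) :
    (Measure.pi fun _ : κ => gaussianReal 0 1).map (fun x => c + A *ᵥ x) =
      (Measure.pi fun _ : κ' => gaussianReal 0 1).map (fun x => c + B *ᵥ x) := by
  refine Measure.ext_of_charFunDual (funext fun L => ?_)
  rw [charFunDual_map_affine_pi_gaussianReal, charFunDual_map_affine_pi_gaussianReal, h]

end ProbabilityTheory

namespace ReluPaper

section Gaussian

variable {ι κ : Type*} [Fintype ι] [DecidableEq ι] [Fintype κ] [DecidableEq κ]

theorem mvGaussian_mul_transpose_eq_map (m : ι → ℝ) (A : Matrix ι κ ℝ) :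
    mvGaussian m (A * Aᵀ) =
      (Measure.pi fun _ : κ => gaussianReal 0 1).map (fun x => m + A *ᵥ x) := by
  have hS : (A * Aᵀ).PosSemidef := by
    simpa only [conjTranspose_eq_transpose_of_trivial] using posSemidef_self_mul_conjTranspose A
  rw [mvGaussian, dif_pos hS]
  refine map_affine_pi_gaussianReal_eq_of_mul_transpose_eq ?_ m
  have hsqrt : hS.1.eigenvectorUnitary.1 * Matrix.diagonal ((Real.sqrt ·) ∘ hS.1.eigenvalues) *
      (star hS.1.eigenvectorUnitary : Matrix ι ι ℝ) = cfc Real.sqrt (A * Aᵀ) := by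
    rw [hS.1.cfc_eq, IsHermitian.cfc, Unitary.conjStarAlgAut_apply]
    rfl
  rw [hsqrt, hS.cfc_sqrt_mul_transpose_self]

theorem map_mvGaussian_affine {μ : κ → ℝ} {S : Matrix κ κ ℝ} (hS : S.PosSemidef)
    (C : Matrix ι κ ℝ) (d : ι → ℝ) :
    (mvGaussian μ S).map (fun x => C *ᵥ x + d) = mvGaussian (C *ᵥ μ + d) (C * S * Cᵀ) := by
  have hR := hS.cfc_sqrt_mul_transpose_self
  set R := cfc Real.sqrt S
  have hCR : C * S * Cᵀ = (C * R) * (C * R)ᵀ := by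
    rw [← hR, transpose_mul]; simp only [Matrix.mul_assoc]
  rw [hCR, ← hR, mvGaussian_mul_transpose_eq_map, mvGaussian_mul_transpose_eq_map,
    Measure.map_map (by fun_prop) (by fun_prop)]
  congr 1
  funext x
  simp only [Function.comp_apply, mulVec_add, mulVec_mulVec]
  abel

theorem sum_smul_mvGaussian_preimage_affine {K : Type*} [Fintype K] (w : K → ENNReal)
    (μ : K → κ → ℝ) (S : K → Matrix κ κ ℝ) (hS : ∀ k, (S k).PosSemidef) (C : Matrix ι κ ℝ)
    (d : ι → ℝ) {B : Set (ι → ℝ)} (hB : MeasurableSet B) :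
    (∑ k, w k • mvGaussian (μ k) (S k)) ((fun x => C *ᵥ x + d) ⁻¹' B) =
      ∑ k, w k * mvGaussian (C *ᵥ μ k + d) (C * S k * Cᵀ) B := by
  rw [Measure.finsetSum_apply]
  refine Finset.sum_congr rfl fun k _ => ?_
  rw [Measure.smul_apply, smul_eq_mul, ← Measure.map_apply (by fun_prop) hB,
    map_mvGaussian_affine (hS k)]

end Gaussian

section Network

variable {n : ℕ → ℕ} (W : ∀ ℓ : ℕ, Matrix (Fin (n (ℓ + 1))) (Fin (n ℓ)) ℝ)
  (b : ∀ ℓ : ℕ, Fin (n (ℓ + 1)) → ℝ)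

theorem continuous_hid : ∀ ℓ : ℕ, Continuous fun x : Fin (n 0) → ℝ => hid W b x ℓ
  | 0 => by simp only [hid]; fun_prop
  | ℓ + 1 => by
      have := continuous_hid ℓ
      simp only [hid]
      fun_prop

theorem inducesPattern_succ {M : ℕ} {x : Fin (n 0) → ℝ} {z : ∀ ℓ : ℕ, Fin (n (ℓ + 1)) → ℝ} :
    inducesPattern (M + 1) W b x z ↔
      inducesPattern M W b x z ∧ ∀ i, (if 0 < hid W b x M i then (1 : ℝ) else 0) = z M i := by
  simp only [inducesPattern, Nat.lt_succ_iff_lt_or_eq, or_imp, forall_and, forall_eq]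

theorem hid_eq_of_inducesPattern {x : Fin (n 0) → ℝ} {z : ∀ ℓ : ℕ, Fin (n (ℓ + 1)) → ℝ} :
    ∀ {ℓ : ℕ}, inducesPattern ℓ W b x z → hid W b x ℓ = Cmat W z ℓ *ᵥ x + dvec W b z ℓ
  | 0, _ => rfl
  | ℓ + 1, h => by
      rw [inducesPattern_succ] at h
      have hrelu : (fun i => max 0 (hid W b x ℓ i)) = diagonal (z ℓ) *ᵥ hid W b x ℓ := by
        funext i
        rw [mulVec_diagonal, ← h.2 i]
        split_ifs with hpos
        · rw [one_mul, max_eq_right hpos.le]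
        · rw [zero_mul, max_eq_left (not_lt.mp hpos)]
      rw [hid, Cmat, dvec, hrelu, hid_eq_of_inducesPattern h.1, mulVec_add, mulVec_add,
        mulVec_mulVec, mulVec_mulVec]
      exact add_assoc _ _ _

theorem inducesPattern_iff_affine {M : ℕ} {x : Fin (n 0) → ℝ}
    {z : ∀ ℓ : ℕ, Fin (n (ℓ + 1)) → ℝ} :
    inducesPattern M W b x z ↔ ∀ ℓ < M, ∀ i,
      (if 0 < (Cmat W z ℓ *ᵥ x + dvec W b z ℓ) i then (1 : ℝ) else 0) = z ℓ i := by
  induction M with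
  | zero => simp [inducesPattern]
  | succ M ih =>
      rw [inducesPattern_succ, Nat.forall_lt_succ_right, ← ih]
      exact and_congr_right fun h => by rw [hid_eq_of_inducesPattern W b h]

theorem measurableSet_orthant_box {ι κ : Type*} [Countable ι] [Countable κ] (c : ι → ℝ)
    (φ : κ → ℝ) :
    MeasurableSet {v : ι ⊕ κ → ℝ | (∀ p, (if 0 < v (Sum.inl p) then (1 : ℝ) else 0) = c p) ∧
      ∀ j, v (Sum.inr j) < φ j} :=
  ((Measurable.forall fun _ => (Measurable.ite (measurableSet_lt measurable_const
      (measurable_pi_apply _)) measurable_const measurable_const).eq measurable_const).and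
    (Measurable.forall fun _ => (measurable_pi_apply _).lt measurable_const)).setOf

noncomputable def activationPattern (M : ℕ) (x : Fin (n 0) → ℝ) : PatIdx M n → Bool :=
  fun p => decide (0 < hid W b x p.1 p.2)

theorem measurable_activationPattern (M : ℕ) :
    Measurable (activationPattern (n := n) W b M) :=
  measurable_pi_lambda _ fun p => measurable_to_bool <| by
    have : (fun x => activationPattern W b M x p) ⁻¹' {true} = {x | 0 < hid W b x p.1 p.2} := by
      ext x
      simp [activationPattern]
    rw [this]
    exact measurableSet_lt measurable_const
      ((continuous_apply p.2).comp (continuous_hid W b p.1)).measurable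

theorem inducesPattern_zOf_iff {M : ℕ} {x : Fin (n 0) → ℝ} {s : PatIdx M n → Bool} :
    inducesPattern M W b x (zOf s) ↔ activationPattern W b M x = s := by
  have hbit : ∀ (t : ℝ) (β : Bool),
      (if 0 < t then (1 : ℝ) else 0) = (if β then 1 else 0) ↔ decide (0 < t) = β := by
    intro t β
    cases β <;> by_cases h : 0 < t <;> simp [h]
  simp only [inducesPattern, zOf, funext_iff, activationPattern]
  constructor
  · rintro h ⟨⟨ℓ, hℓ⟩, i⟩
    simpa only [dif_pos hℓ, hbit] using h ℓ hℓ i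
  · intro h ℓ hℓ i
    simpa only [dif_pos hℓ, hbit] using h ⟨⟨ℓ, hℓ⟩, i⟩

theorem preimage_stackedAffine {M : ℕ} (z : ∀ ℓ : ℕ, Fin (n (ℓ + 1)) → ℝ)
    (C : Matrix (PatIdx M n ⊕ Fin (n (M + 1))) (Fin (n 0)) ℝ)
    (hC₁ : ∀ p j, C (Sum.inl p) j = Cmat W z p.1 p.2 j)
    (hC₂ : ∀ i j, C (Sum.inr i) j = Cmat W z M i j)
    (d : PatIdx M n ⊕ Fin (n (M + 1)) → ℝ)
    (hd₁ : ∀ p, d (Sum.inl p) = dvec W b z p.1 p.2) (hd₂ : ∀ i, d (Sum.inr i) = dvec W b z M i)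
    (φ : Fin (n (M + 1)) → ℝ) :
    (fun x => C *ᵥ x + d) ⁻¹' {v | (∀ p : PatIdx M n,
        (if 0 < v (Sum.inl p) then (1 : ℝ) else 0) = z p.1 p.2) ∧ ∀ j, v (Sum.inr j) < φ j} =
      {x | inducesPattern M W b x z ∧ ∀ j, hid W b x M j < φ j} := by
  ext x
  have hinl : ∀ p, (C *ᵥ x + d) (Sum.inl p) = (Cmat W z p.1 *ᵥ x + dvec W b z p.1) p.2 := by
    simp [mulVec, dotProduct, hC₁, hd₁]
  have hinr : ∀ i, (C *ᵥ x + d) (Sum.inr i) = (Cmat W z M *ᵥ x + dvec W b z M) i := by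
    simp [mulVec, dotProduct, hC₂, hd₂]
  have hpat : (∀ p : PatIdx M n, (if 0 < (C *ᵥ x + d) (Sum.inl p) then (1 : ℝ) else 0) =
      z p.1 p.2) ↔ inducesPattern M W b x z := by
    simp only [hinl, inducesPattern_iff_affine]
    exact ⟨fun h ℓ hℓ i => h ⟨⟨ℓ, hℓ⟩, i⟩, fun h p => h p.1 p.1.2 p.2⟩
  simp only [Set.mem_preimage, Set.mem_ofPred_eq, hpat]
  exact and_congr_right fun h => by simp only [hinr, hid_eq_of_inducesPattern W b h]

end Network

open Classical

theorem statement12_general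
    (n : ℕ → ℕ) (M : ℕ)  -- the network has `L = M + 1` layers
    (W : ∀ ℓ : ℕ, Matrix (Fin (n (ℓ + 1))) (Fin (n ℓ)) ℝ)
    (b : ∀ ℓ : ℕ, Fin (n (ℓ + 1)) → ℝ)
    (Kc : ℕ) (α : Fin Kc → ℝ)
    (μmix : Fin Kc → Fin (n 0) → ℝ) (Smix : Fin Kc → Matrix (Fin (n 0)) (Fin (n 0)) ℝ)
    (hSpd : ∀ k, (Smix k).PosDef)
    {Ω : Type*} [MeasurableSpace Ω] (P : Measure Ω)
    (X : Ω → Fin (n 0) → ℝ) (hX : Measurable X)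
    -- the input has Gaussian-mixture law `μ = ∑ k, α k • N(μ_k, Σ_k)`
    (hlaw : P.map X = ∑ k, ENNReal.ofReal (α k) • mvGaussian (μmix k) (Smix k))
    -- the stacked matrices `C̄^{(L)}` and vectors `d̄^{(L)}` for each pattern
    (Cbar : (PatIdx M n → Bool) → Matrix (PatIdx M n ⊕ Fin (n (M + 1))) (Fin (n 0)) ℝ)
    (hCbar₁ : ∀ s (p : PatIdx M n) (j : Fin (n 0)),
      Cbar s (Sum.inl p) j = Cmat W (zOf s) (p.1 : ℕ) p.2 j)
    (hCbar₂ : ∀ s (i : Fin (n (M + 1))) (j : Fin (n 0)),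
      Cbar s (Sum.inr i) j = Cmat W (zOf s) M i j)
    (dbar : (PatIdx M n → Bool) → PatIdx M n ⊕ Fin (n (M + 1)) → ℝ)
    (hdbar₁ : ∀ s (p : PatIdx M n), dbar s (Sum.inl p) = dvec W b (zOf s) (p.1 : ℕ) p.2)
    (hdbar₂ : ∀ s (i : Fin (n (M + 1))), dbar s (Sum.inr i) = dvec W b (zOf s) M i)
    (φ : Fin (n (M + 1)) → ℝ) :
    P {ω | ∀ j, hid W b (X ω) M j < φ j} =
      ∑ s ∈ Finset.univ.filter
          (fun s : PatIdx M n → Bool => 0 < P {ω | inducesPattern M W b (X ω) (zOf s)}),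
        ∑ k, ENNReal.ofReal (α k) *
          mvGaussian (Cbar s *ᵥ μmix k + dbar s) (Cbar s * Smix k * (Cbar s)ᵀ)
            {v : PatIdx M n ⊕ Fin (n (M + 1)) → ℝ |
              (∀ p : PatIdx M n,
                (if 0 < v (Sum.inl p) then (1 : ℝ) else 0) = zOf s (p.1 : ℕ) p.2) ∧
              (∀ j, v (Sum.inr j) < φ j)} := by
  set pattern := fun ω => activationPattern W b M (X ω)
  have hpattern : Measurable pattern := (measurable_activationPattern W b M).comp hX
  have hfiber : ∀ s, {ω | inducesPattern M W b (X ω) (zOf s)} = pattern ⁻¹' {s} := fun s => by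
    ext ω
    exact inducesPattern_zOf_iff W b
  set E := {ω | ∀ j, hid W b (X ω) M j < φ j}
  have hsum : P E = ∑ s, P (pattern ⁻¹' {s} ∩ E) := by
    rw [← Measure.restrict_apply_univ, ← Set.preimage_univ (f := pattern), ← Finset.coe_univ,
      ← sum_measure_preimage_singleton _ fun s _ => hpattern (measurableSet_singleton s)]
    simp only [Measure.restrict_apply (hpattern (measurableSet_singleton _))]
  simp only [hfiber]
  rw [hsum, ← Finset.sum_filter_of_ne (p := fun s => 0 < P (pattern ⁻¹' {s}))
    fun s _ h => pos_iff_ne_zero.mpr fun h0 => h (measure_mono_null Set.inter_subset_left h0)]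
  refine Finset.sum_congr rfl fun s _ => ?_
  have hbox := measurableSet_orthant_box (fun p : PatIdx M n => zOf s p.1 p.2) φ
  rw [← sum_smul_mvGaussian_preimage_affine _ _ _ (fun k => (hSpd k).posSemidef) _ _ hbox,
    ← hlaw, Measure.map_apply hX (hbox.preimage (by fun_prop)),
    preimage_stackedAffine W b (zOf s) (Cbar s) (hCbar₁ s) (hCbar₂ s) (dbar s) (hdbar₁ s)
      (hdbar₂ s) φ, ← hfiber]
  rfl

/-- Proposition 3, CDF form: `P(f(x) < φ)` is the sum, over activation
patterns with positive probability and mixture components, of Gaussian probabilities of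
`{(u, w) : u ∈ O(ζ'), w < φ}` with parameters built from `C̄^{(L)}, d̄^{(L)}`. -/
theorem statement12
    (n : ℕ → ℕ) (M : ℕ)  -- the network has `L = M + 1` layers
    (W : ∀ ℓ : ℕ, Matrix (Fin (n (ℓ + 1))) (Fin (n ℓ)) ℝ)
    (b : ∀ ℓ : ℕ, Fin (n (ℓ + 1)) → ℝ)
    (Kc : ℕ) (α : Fin Kc → ℝ) (hα : ∀ k, 0 < α k) (hαsum : ∑ k, α k = 1)
    (μmix : Fin Kc → Fin (n 0) → ℝ) (Smix : Fin Kc → Matrix (Fin (n 0)) (Fin (n 0)) ℝ)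
    (hSpd : ∀ k, (Smix k).PosDef)
    {Ω : Type*} [MeasurableSpace Ω] (P : Measure Ω) [IsProbabilityMeasure P]
    (X : Ω → Fin (n 0) → ℝ) (hX : Measurable X)
    -- the input has Gaussian-mixture law `μ = ∑ k, α k • N(μ_k, Σ_k)`
    (hlaw : P.map X = ∑ k, ENNReal.ofReal (α k) • mvGaussian (μmix k) (Smix k))
    -- the stacked matrices `C̄^{(L)}` and vectors `d̄^{(L)}` for each pattern
    (Cbar : (PatIdx M n → Bool) → Matrix (PatIdx M n ⊕ Fin (n (M + 1))) (Fin (n 0)) ℝ)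
    (hCbar₁ : ∀ s (p : PatIdx M n) (j : Fin (n 0)),
      Cbar s (Sum.inl p) j = Cmat W (zOf s) (p.1 : ℕ) p.2 j)
    (hCbar₂ : ∀ s (i : Fin (n (M + 1))) (j : Fin (n 0)),
      Cbar s (Sum.inr i) j = Cmat W (zOf s) M i j)
    (dbar : (PatIdx M n → Bool) → PatIdx M n ⊕ Fin (n (M + 1)) → ℝ)
    (hdbar₁ : ∀ s (p : PatIdx M n), dbar s (Sum.inl p) = dvec W b (zOf s) (p.1 : ℕ) p.2)
    (hdbar₂ : ∀ s (i : Fin (n (M + 1))), dbar s (Sum.inr i) = dvec W b (zOf s) M i)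
    -- `Σ̃_{k,ζ'}` is invertible for all `k` and all patterns of positive probability
    (hinv : ∀ s, 0 < P {ω | inducesPattern M W b (X ω) (zOf s)} →
      ∀ k, IsUnit (Cbar s * Smix k * (Cbar s)ᵀ))
    (φ : Fin (n (M + 1)) → ℝ) :
    P {ω | ∀ j, hid W b (X ω) M j < φ j} =
      ∑ s ∈ Finset.univ.filter
          (fun s : PatIdx M n → Bool => 0 < P {ω | inducesPattern M W b (X ω) (zOf s)}),
        ∑ k, ENNReal.ofReal (α k) *
          mvGaussian (Cbar s *ᵥ μmix k + dbar s) (Cbar s * Smix k * (Cbar s)ᵀ)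
            {v : PatIdx M n ⊕ Fin (n (M + 1)) → ℝ |
              (∀ p : PatIdx M n,
                (if 0 < v (Sum.inl p) then (1 : ℝ) else 0) = zOf s (p.1 : ℕ) p.2) ∧
              (∀ j, v (Sum.inr j) < φ j)} :=
  statement12_general n M W b Kc α μmix Smix hSpd P X hX hlaw Cbar hCbar₁ hCbar₂ dbar hdbar₁ hdbar₂
    φ

end ReluPaper
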